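/- arXiv:1901.07483 — 6 statements merged into one kernel-verified Lean document; each statement's English description precedes it below -/
import Mathlib

section
/- Let f be a continuous map of a metric space M, ω ∈ ℝ^d a nonresonant vector (i.e., k·ω ∉ ℤ for all nonzero k ∈ ℤ^d), and T_ω(θ) = θ + ω the rotation on the torus T^d. If K₁, K₂ : T^d → M are continuous maps satisfying f ∘ Kᵢ = Kᵢ ∘ T_ω for i = 1,2, and the ranges of K₁ and K₂ intersect, then there exists σ ∈ ℝ^d such that K₁ = K₂ ∘ T_σ. -/
/-- The rotation of the torus `T^d = (ℝ/ℤ)^d` by the vector `ω ∈ ℝ^d`. -/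
noncomputable def torusRot (d : ℕ) (ω : Fin d → ℝ) : Fin d → AddCircle (1 : ℝ) :=
  fun i => (ω i : AddCircle (1 : ℝ))

/-!
The set `A` where `K₁` agrees with `K₂ ∘ T_σ`, for `σ` chosen so that `A` contains a point, is
closed and forward invariant under `T_ω`; so `A` is the whole torus once forward orbits of `T_ω` are
dense (Kronecker). Density follows Weyl: for a character `χ` with `χ ω ≠ 1`, the Birkhoff averages
of `χ` along any orbit tend to `0 = ∫ χ`, so by uniform density of trigonometric polynomials the
averages of every continuous function tend to its integral, which cannot happen along an orbit
avoiding an open set.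
-/

open Filter Function MeasureTheory Set Topology

section BirkhoffAverage

variable {α E 𝕜 : Type*}

theorem birkhoffAverage_comp_self [DivisionSemiring 𝕜] [AddCommMonoid E] [Module 𝕜 E]
    (f : α → α) (g : α → E) (n : ℕ) (x : α) :
    birkhoffAverage 𝕜 f (g ∘ f) n x = birkhoffAverage 𝕜 f g n (f x) := by
  simp only [birkhoffAverage, birkhoffSum, comp_apply, (Commute.self_iterate f _).eq]

theorem birkhoffAverage_smul [Field 𝕜] [AddCommMonoid E] [Module 𝕜 E]
    (f : α → α) (c : 𝕜) (g : α → E) (n : ℕ) (x : α) :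
    birkhoffAverage 𝕜 f (c • g) n x = c • birkhoffAverage 𝕜 f g n x := by
  simp only [birkhoffAverage, birkhoffSum, Pi.smul_apply, ← Finset.smul_sum, smul_comm c]

variable [RCLike 𝕜] [NormedAddCommGroup E] [NormedSpace 𝕜 E]

theorem norm_birkhoffAverage_le {f : α → α} {g : α → E} {C : ℝ} (hg : ∀ y, ‖g y‖ ≤ C)
    (n : ℕ) (x : α) : ‖birkhoffAverage 𝕜 f g n x‖ ≤ C := by
  rcases eq_or_ne n 0 with rfl | hn
  · simpa using (norm_nonneg _).trans (hg x)
  rw [birkhoffAverage, norm_smul, norm_inv, RCLike.norm_natCast,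
    inv_mul_le_iff₀ (by positivity)]
  calc ‖birkhoffSum f g n x‖ ≤ ∑ _k ∈ Finset.range n, C := norm_sum_le_of_le _ fun k _ => hg _
    _ = n * C := by simp

theorem tendsto_birkhoffAverage_zero_of_comp_eq_smul {f : α → α} {g : α → E} {c : 𝕜}
    (hc : c ≠ 1) (hfg : g ∘ f = c • g) (hg : Bornology.IsBounded (range g)) (x : α) :
    Tendsto (birkhoffAverage 𝕜 f g · x) atTop (𝓝 0) := by
  have h := tendsto_birkhoffAverage_apply_sub_birkhoffAverage' 𝕜 hg f x
  have hsub : ∀ n, birkhoffAverage 𝕜 f g n (f x) - birkhoffAverage 𝕜 f g n x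
      = (c - 1) • birkhoffAverage 𝕜 f g n x := fun n => by
    rw [← birkhoffAverage_comp_self, hfg, birkhoffAverage_smul, sub_smul, one_smul]
  simp only [hsub] at h
  simpa [inv_smul_smul₀ (sub_ne_zero.2 hc)] using h.const_smul (c - 1)⁻¹

end BirkhoffAverage

theorem lipschitzWith_birkhoffAverage_continuousMap {X : Type*} [TopologicalSpace X]
    [CompactSpace X] (f : X → X) (x : X) (n : ℕ) :
    LipschitzWith 1 fun g : C(X, ℂ) => birkhoffAverage ℂ f g n x := by
  refine LipschitzWith.of_dist_le_mul fun g h => ?_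
  rw [NNReal.coe_one, one_mul, dist_eq_norm, dist_eq_norm]
  simpa [birkhoffAverage_sub] using
    norm_birkhoffAverage_le (fun y => (g - h).norm_coe_le_norm y) n x

section BirkhoffConvergent

variable {X : Type*} [TopologicalSpace X] [CompactSpace X] [MeasurableSpace X]
  [OpensMeasurableSpace X] (μ : Measure X) (f : X → X) (x : X)

theorem ContinuousMap.integrable_of_compactSpace [IsFiniteMeasure μ] {E : Type*}
    [NormedAddCommGroup E] (g : C(X, E)) :
    Integrable g μ := g.continuous.integrable_of_hasCompactSupport (.of_compactSpace _)

/-- `x` is `μ`-generic for `f` when this submodule is `⊤`. -/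
noncomputable def birkhoffConvergent [IsFiniteMeasure μ] : Submodule ℂ C(X, ℂ) where
  carrier := {g | Tendsto (birkhoffAverage ℂ f g · x) atTop (𝓝 (∫ y, g y ∂μ))}
  zero_mem' := by simp [birkhoffAverage, birkhoffSum]
  add_mem' {g h} hg hh := by
    simp only [mem_ofPred_eq, ContinuousMap.coe_add, birkhoffAverage_add, Pi.add_apply,
      integral_add (g.integrable_of_compactSpace μ) (h.integrable_of_compactSpace μ)]
    exact hg.add hh
  smul_mem' c g hg := by
    simp only [mem_ofPred_eq, ContinuousMap.coe_smul, birkhoffAverage_smul, Pi.smul_apply,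
      integral_smul]
    exact hg.const_smul c

theorem lipschitzWith_integral_continuousMap [IsProbabilityMeasure μ] :
    LipschitzWith 1 fun g : C(X, ℂ) => ∫ y, g y ∂μ := by
  refine LipschitzWith.of_dist_le_mul fun g h => ?_
  rw [NNReal.coe_one, one_mul, dist_eq_norm, dist_eq_norm,
    ← integral_sub (g.integrable_of_compactSpace μ) (h.integrable_of_compactSpace μ)]
  simpa using norm_integral_le_of_norm_le_const (μ := μ)
    (Eventually.of_forall fun y => (g - h).norm_coe_le_norm y)

theorem isClosed_birkhoffConvergent [IsProbabilityMeasure μ] :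
    IsClosed (birkhoffConvergent μ f x : Set C(X, ℂ)) :=
  ((LipschitzWith.uniformEquicontinuous _ 1
    (lipschitzWith_birkhoffAverage_continuousMap f x)).equicontinuous).isClosed_setOfPred_tendsto
    (lipschitzWith_integral_continuousMap μ).continuous

theorem birkhoffConvergent_eq_top_of_span [IsProbabilityMeasure μ] {s : Set C(X, ℂ)}
    (hs : (Submodule.span ℂ s).topologicalClosure = ⊤) (hsμ : s ⊆ birkhoffConvergent μ f x) :
    birkhoffConvergent μ f x = ⊤ :=
  top_le_iff.1 <| hs ▸ Submodule.topologicalClosure_minimal _ (Submodule.span_le.2 hsμ)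
    (isClosed_birkhoffConvergent μ f x)

theorem denseRange_iterate_of_birkhoffConvergent_eq_top [T2Space X] [IsProbabilityMeasure μ]
    [μ.IsOpenPosMeasure] (h : birkhoffConvergent μ f x = ⊤) : DenseRange (f^[·] x) := by
  intro y
  by_contra hy
  obtain ⟨g, hg0, hg1, hg01⟩ := exists_continuous_zero_one_of_isClosed isClosed_closure
    isClosed_singleton (disjoint_singleton_right.2 hy)
  let G : C(X, ℂ) := ⟨fun z => (g z : ℂ), by fun_prop⟩
  have hG : G ∈ birkhoffConvergent μ f x := h ▸ Submodule.mem_top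
  have hGorbit : ∀ n, birkhoffAverage ℂ f G n x = 0 := fun n => by
    simp [birkhoffAverage, birkhoffSum, G, hg0 (subset_closure (mem_range_self _))]
  have hGmean : ∫ z, G z ∂μ = 0 := tendsto_nhds_unique hG (by simp [hGorbit])
  have hgmean : 0 < ∫ z, g z ∂μ :=
    g.continuous.integral_pos_of_hasCompactSupport_nonneg_nonzero (.of_compactSpace _)
      (fun z => (hg01 z).1) (x := y) (by simp [hg1 rfl])
  simp only [G, ContinuousMap.coe_mk, integral_complex_ofReal, Complex.ofReal_eq_zero] at hGmean
  exact hgmean.ne' hGmean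

end BirkhoffConvergent

theorem IsClosed.eq_univ_of_denseRange_iterate {X : Type*} [TopologicalSpace X] {f : X → X}
    {s : Set X} {x : X} (hs : IsClosed s) (hf : MapsTo f s s) (hx : x ∈ s)
    (hd : DenseRange (f^[·] x)) : s = univ :=
  eq_univ_of_univ_subset <| hd.closure_range ▸
    hs.closure_subset_iff.2 (range_subset_iff.2 fun n => hf.iterate n hx)

namespace UnitAddTorus

variable {ι : Type*} [Fintype ι]

theorem mFourier_add_apply (n : ι → ℤ) (x y : UnitAddTorus ι) :
    mFourier n (x + y) = mFourier n x * mFourier n y := by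
  simp only [mFourier, ContinuousMap.coe_mk, Pi.add_apply, fourier_apply, smul_add,
    AddCircle.toCircle_add, Circle.coe_mul, ← Finset.prod_mul_distrib]

theorem integral_mFourier_eq_zero (μ : Measure (UnitAddTorus ι)) [μ.IsAddRightInvariant]
    {n : ι → ℤ} {v : UnitAddTorus ι} (hv : mFourier n v ≠ 1) :
    ∫ θ, mFourier n θ ∂μ = 0 := by
  have h : ∫ θ, mFourier n θ ∂μ = (∫ θ, mFourier n θ ∂μ) * mFourier n v := by
    conv_lhs => rw [← integral_add_right_eq_self _ v]
    simp only [mFourier_add_apply, integral_mul_const]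
  have h' : (∫ θ, mFourier n θ ∂μ) * (mFourier n v - 1) = 0 := by linear_combination -h
  exact (mul_eq_zero.1 h').resolve_right (sub_ne_zero.2 hv)

variable (μ : Measure (UnitAddTorus ι)) {v : UnitAddTorus ι}

theorem mFourier_mem_birkhoffConvergent [IsProbabilityMeasure μ] [μ.IsAddRightInvariant]
    (hv : ∀ n ≠ 0, mFourier n v ≠ 1) (θ : UnitAddTorus ι) (n : ι → ℤ) :
    mFourier n ∈ birkhoffConvergent μ (· + v) θ := by
  show Tendsto _ atTop (𝓝 _)
  rcases eq_or_ne n 0 with rfl | hn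
  · simp only [mFourier_zero, ContinuousMap.coe_one, Pi.one_apply, integral_const,
      probReal_univ, one_smul]
    refine tendsto_const_nhds.congr' <| (eventually_ne_atTop 0).mono fun N hN => ?_
    dsimp only
    rw [birkhoffAverage_of_comp_eq ℂ (f := (· + v)) (g := 1) rfl (Nat.cast_ne_zero.2 hN),
      Pi.one_apply]
  · rw [integral_mFourier_eq_zero μ (hv n hn)]
    exact tendsto_birkhoffAverage_zero_of_comp_eq_smul (hv n hn)
      (funext fun θ => by simp [mFourier_add_apply, mul_comm])
      (isCompact_range (map_continuous _)).isBounded θ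

theorem birkhoffConvergent_add_eq_top [IsProbabilityMeasure μ] [μ.IsAddRightInvariant]
    (hv : ∀ n ≠ 0, mFourier n v ≠ 1) (θ : UnitAddTorus ι) :
    birkhoffConvergent μ (· + v) θ = ⊤ :=
  birkhoffConvergent_eq_top_of_span μ _ θ span_mFourier_closure_eq_top
    (range_subset_iff.2 (mFourier_mem_birkhoffConvergent μ hv θ))

/-- Kronecker's theorem. -/
theorem denseRange_iterate_add (hv : ∀ n ≠ 0, mFourier n v ≠ 1) (θ : UnitAddTorus ι) :
    DenseRange ((· + v)^[·] θ) :=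
  denseRange_iterate_of_birkhoffConvergent_eq_top (Measure.pi fun _ ↦ AddCircle.haarAddCircle)
    _ θ (birkhoffConvergent_add_eq_top _ hv θ)

end UnitAddTorus

theorem mFourier_torusRot {d : ℕ} (k : Fin d → ℤ) (ω : Fin d → ℝ) :
    UnitAddTorus.mFourier k (torusRot d ω) =
      Complex.exp (2 * Real.pi * Complex.I * ((∑ i, (k i : ℝ) * ω i : ℝ) : ℂ)) := by
  simp only [UnitAddTorus.mFourier, ContinuousMap.coe_mk, torusRot, fourier_coe_apply,
    ← Complex.exp_sum]
  push_cast
  congr 1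
  simp only [Finset.mul_sum]
  exact Finset.sum_congr rfl fun i _ => by ring

theorem mFourier_torusRot_ne_one {d : ℕ} {k : Fin d → ℤ} {ω : Fin d → ℝ}
    (h : ∀ m : ℤ, (∑ i, (k i : ℝ) * ω i) ≠ m) : UnitAddTorus.mFourier k (torusRot d ω) ≠ 1 := by
  rw [mFourier_torusRot, Ne, Complex.exp_eq_one_iff]
  rintro ⟨m, hm⟩
  refine h m (Complex.ofReal_injective ?_)
  apply mul_left_cancel₀ Complex.two_pi_I_ne_zero
  rw [hm]
  push_cast
  ring

theorem semiconjugacy_unique_up_to_translation_general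
    {d : ℕ} {M : Type*} [MetricSpace M]
    (f : M → M)
    (ω : Fin d → ℝ)
    (hnr : ∀ k : Fin d → ℤ, k ≠ 0 → ∀ m : ℤ, (∑ i, (k i : ℝ) * ω i) ≠ (m : ℝ))
    (K₁ K₂ : (Fin d → AddCircle (1 : ℝ)) → M)
    (hK₁ : Continuous K₁) (hK₂ : Continuous K₂)
    (hinv₁ : ∀ θ, f (K₁ θ) = K₁ (θ + torusRot d ω))
    (hinv₂ : ∀ θ, f (K₂ θ) = K₂ (θ + torusRot d ω))
    (hmeet : ∃ θ₁ θ₂, K₁ θ₁ = K₂ θ₂) :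
    ∃ σ : Fin d → ℝ, ∀ θ, K₁ θ = K₂ (θ + torusRot d σ) := by
  obtain ⟨θ₁, θ₂, hθ⟩ := hmeet
  obtain ⟨σ, hσ⟩ : ∃ σ, torusRot d σ = θ₂ - θ₁ := by
    choose σ hσ using fun i => QuotientAddGroup.mk_surjective ((θ₂ - θ₁) i)
    exact ⟨σ, funext hσ⟩
  set A := {θ | K₁ θ = K₂ (θ + torusRot d σ)}
  have hmaps : MapsTo (· + torusRot d ω) A A := fun θ (hθ : K₁ θ = _) =>
    show K₁ _ = K₂ _ by rw [← hinv₁, hθ, hinv₂, add_right_comm]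
  have hA : A = univ := (isClosed_eq hK₁ (by fun_prop)).eq_univ_of_denseRange_iterate hmaps
    (by simp [hσ, hθ])
    (UnitAddTorus.denseRange_iterate_add (fun k hk => mFourier_torusRot_ne_one (hnr k hk)) θ₁)
  exact ⟨σ, eq_univ_iff_forall.1 hA⟩

/-- If `ω` is nonresonant and `K₁, K₂` are continuous semiconjugacies from the rotation
`T_ω` to `f` whose ranges intersect, then `K₁ = K₂ ∘ T_σ` for some `σ ∈ ℝ^d`. -/
theorem semiconjugacy_unique_up_to_translation
    {d : ℕ} {M : Type*} [MetricSpace M]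
    (f : M → M) (hf : Continuous f)
    (ω : Fin d → ℝ)
    (hnr : ∀ k : Fin d → ℤ, k ≠ 0 → ∀ m : ℤ, (∑ i, (k i : ℝ) * ω i) ≠ (m : ℝ))
    (K₁ K₂ : (Fin d → AddCircle (1 : ℝ)) → M)
    (hK₁ : Continuous K₁) (hK₂ : Continuous K₂)
    (hinv₁ : ∀ θ, f (K₁ θ) = K₁ (θ + torusRot d ω))
    (hinv₂ : ∀ θ, f (K₂ θ) = K₂ (θ + torusRot d ω))
    (hmeet : ∃ θ₁ θ₂, K₁ θ₁ = K₂ θ₂) :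
    ∃ σ : Fin d → ℝ, ∀ θ, K₁ θ = K₂ (θ + torusRot d σ) :=
  semiconjugacy_unique_up_to_translation_general f ω hnr K₁ K₂ hK₁ hK₂ hinv₁ hinv₂ hmeet
end

section
/- Let f: M → M be a conformally symplectic diffeomorphism with f*Ω = λΩ, |λ| ≠ 1, and let K: T^d → M be an embedding satisfying f ∘ K = K ∘ T_ω. Then K*Ω = 0, i.e., the invariant torus is isotropic. -/
/-!
The pullback `g = (K*Ω)(u, v)`, read as a function on `ℝ^d`, is continuous and `ℤ^d`-periodic,
hence bounded, and the invariance equation with the chain rule gives `g (θ + ω) = λ g θ`.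
Iterating forwards (`|λ| > 1`) or backwards (`|λ| < 1`) along the rotation,
`|g| ≤ |λ|^{±n} sup |g|` for every `n`, which forces `g = 0`.
-/

open Filter Topology

theorem eq_zero_of_comp_eq_smul_of_bddAbove {α F : Type*} [NormedAddCommGroup F]
    [NormedSpace ℝ F] {g : α → F} {τ : α → α} {lam : ℝ} (hτ : Function.Surjective τ)
    (hlam : |lam| ≠ 1) (hg : ∀ x, g (τ x) = lam • g x)
    (hbdd : BddAbove (Set.range fun x => ‖g x‖)) : g = 0 := by
  obtain ⟨M, hM⟩ := hbdd
  rw [mem_upperBounds, Set.forall_mem_range] at hM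
  have hiter : ∀ n x, ‖g (τ^[n] x)‖ = |lam| ^ n * ‖g x‖ := by
    intro n
    induction n with
    | zero => simp
    | succ n ih => intro x; rw [Function.iterate_succ_apply', hg, norm_smul, ih,
        Real.norm_eq_abs, pow_succ, mul_assoc, mul_left_comm]
  funext x
  rw [Pi.zero_apply, ← norm_le_zero_iff]
  rcases hlam.lt_or_gt with hlt | hgt
  · have hle : ∀ n, ‖g x‖ ≤ |lam| ^ n * M := fun n => by
      obtain ⟨y, rfl⟩ := hτ.iterate n x
      rw [hiter]
      gcongr
      exact hM y
    simpa using ge_of_tendsto'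
      ((tendsto_pow_atTop_nhds_zero_of_lt_one (abs_nonneg lam) hlt).mul_const M) hle
  · by_contra! hpos
    have hgrow : Tendsto (fun n => |lam| ^ n * ‖g x‖) atTop atTop :=
      (tendsto_pow_atTop_atTop_of_one_lt hgt).atTop_mul_const hpos
    obtain ⟨n, hn⟩ := (hgrow.eventually_gt_atTop M).exists
    exact (hn.trans_le ((hiter n x).symm.trans_le (hM _))).false

theorem bddAbove_range_norm_of_intPeriodic {ι F : Type*} [Finite ι] [NormedAddCommGroup F]
    {g : (ι → ℝ) → F} (hg : Continuous g)
    (hper : ∀ θ (k : ι → ℤ), g (θ + fun i => (k i : ℝ)) = g θ) :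
    BddAbove (Set.range fun θ => ‖g θ‖) := by
  obtain ⟨C, hC⟩ := (isCompact_Icc (a := (0 : ι → ℝ)) (b := 1)).exists_bound_of_continuousOn
    hg.continuousOn
  refine ⟨C, Set.forall_mem_range.2 fun θ => ?_⟩
  have hfract : θ = (fun i => Int.fract (θ i)) + fun i => (⌊θ i⌋ : ℝ) := by
    funext i
    exact (Int.fract_add_floor (θ i)).symm
  rw [hfract, hper]
  exact hC _ ⟨fun i => Int.fract_nonneg _, fun i => (Int.fract_lt_one _).le⟩

section Pullback

variable {V E : Type*} [NormedAddCommGroup V] [NormedSpace ℝ V]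
  [NormedAddCommGroup E] [NormedSpace ℝ E] (Ω : E → E →L[ℝ] E →L[ℝ] ℝ) {K : V → E}

/-- `(K*Ω)_θ (u, v)`, as a function of the base point `θ`. -/
noncomputable def pullbackForm (K : V → E) (u v : V) (θ : V) : ℝ :=
  Ω (K θ) (fderiv ℝ K θ u) (fderiv ℝ K θ v)

theorem continuous_pullbackForm (hΩ : Continuous Ω) (hK : ContDiff ℝ 1 K) (u v : V) :
    Continuous (pullbackForm Ω K u v) := by
  have hdK := hK.continuous_fderiv one_ne_zero
  exact ((hΩ.comp hK.continuous).clm_apply (hdK.clm_apply continuous_const)).clm_apply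
    (hdK.clm_apply continuous_const)

theorem pullbackForm_add_of_periodic {c : V} (hc : ∀ θ, K (θ + c) = K θ) (u v θ : V) :
    pullbackForm Ω K u v (θ + c) = pullbackForm Ω K u v θ := by
  have hdK : fderiv ℝ K (θ + c) = fderiv ℝ K θ := by
    rw [← fderiv_comp_add_right, funext hc]
  simp only [pullbackForm, hdK, hc]

theorem pullbackForm_add_of_conformal {f : E → E} {lam : ℝ} (hf : Differentiable ℝ f)
    (hK : Differentiable ℝ K)
    (hconf : ∀ x u v, Ω (f x) (fderiv ℝ f x u) (fderiv ℝ f x v) = lam * Ω x u v)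
    {ω : V} (hinv : ∀ θ, f (K θ) = K (θ + ω)) (u v θ : V) :
    pullbackForm Ω K u v (θ + ω) = lam * pullbackForm Ω K u v θ := by
  have hchain : fderiv ℝ K (θ + ω) = (fderiv ℝ f (K θ)).comp (fderiv ℝ K θ) := by
    rw [← fderiv_comp_add_right, ← funext hinv]
    exact fderiv_comp θ (hf _) (hK θ)
  simp only [pullbackForm, hchain, ← hinv θ]
  exact hconf _ _ _

end Pullback

theorem invariant_torus_isotropic_general
    {E : Type*} [NormedAddCommGroup E] [NormedSpace ℝ E] {d : ℕ}
    (Ω : E → (E →L[ℝ] E →L[ℝ] ℝ)) (hΩ : Continuous Ω)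
    (f : E → E) (hf : Differentiable ℝ f)
    (lam : ℝ) (hlam : |lam| ≠ 1)
    (hconf : ∀ x : E, ∀ u v : E,
      Ω (f x) (fderiv ℝ f x u) (fderiv ℝ f x v) = lam * Ω x u v)
    (ω : Fin d → ℝ)
    (K : (Fin d → ℝ) → E) (hK : ContDiff ℝ 1 K)
    (hper : ∀ θ (k : Fin d → ℤ), K (θ + fun i => (k i : ℝ)) = K θ)
    (hinv : ∀ θ, f (K θ) = K (θ + ω)) :
    ∀ θ u v, Ω (K θ) (fderiv ℝ K θ u) (fderiv ℝ K θ v) = 0 := by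
  intro θ u v
  have hbdd : BddAbove (Set.range fun θ => ‖pullbackForm Ω K u v θ‖) :=
    bddAbove_range_norm_of_intPeriodic (continuous_pullbackForm Ω hΩ hK u v)
      fun θ k => pullbackForm_add_of_periodic Ω (hper · k) u v θ
  have hzero : pullbackForm Ω K u v = 0 :=
    eq_zero_of_comp_eq_smul_of_bddAbove (Equiv.addRight ω).surjective hlam
      (pullbackForm_add_of_conformal Ω hf (hK.differentiable one_ne_zero) hconf hinv u v) hbdd
  exact congrFun hzero θ

/-- An invariant rotational torus of a conformally symplectic map `f` (`f*Ω = λ Ω`,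
`|λ| ≠ 1`) is isotropic: the pullback `K*Ω` vanishes.  The torus is parameterized by a
`ℤ^d`-periodic `C¹` embedding `K : ℝ^d → E` satisfying `f ∘ K = K ∘ T_ω`. -/
theorem invariant_torus_isotropic
    {E : Type*} [NormedAddCommGroup E] [NormedSpace ℝ E] {d : ℕ}
    (Ω : E → (E →L[ℝ] E →L[ℝ] ℝ)) (hΩ : Continuous Ω)
    (f : E → E) (hf : Differentiable ℝ f)
    (lam : ℝ) (hlam : |lam| ≠ 1)
    (hconf : ∀ x : E, ∀ u v : E,
      Ω (f x) (fderiv ℝ f x u) (fderiv ℝ f x v) = lam * Ω x u v)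
    (ω : Fin d → ℝ)
    (K : (Fin d → ℝ) → E) (hK : ContDiff ℝ 1 K)
    (hper : ∀ θ (k : Fin d → ℤ), K (θ + fun i => (k i : ℝ)) = K θ)
    (hemb : ∀ θ θ', K θ = K θ' → ∃ k : Fin d → ℤ, θ' = θ + fun i => (k i : ℝ))
    (hinv : ∀ θ, f (K θ) = K (θ + ω)) :
    ∀ θ u v, Ω (K θ) (fderiv ℝ K θ u) (fderiv ℝ K θ v) = 0 :=
  invariant_torus_isotropic_general Ω hΩ f hf lam hlam hconf ω K hK hper hinv
end

section
/- Let Γ be the product cocycle generated by γ over a rotation, satisfying ‖Γ^m‖ ≤ C₀ ξ^m for all m ≥ 0 with ξ < 1 and C₀ ≥ 1. If γ̃ is another cocycle with ‖γ − γ̃‖ ≤ ε* for ε* sufficiently small (depending only on C₀, ξ, and sup-norms of γ), then there exist constants C̃₀ and ξ̃ < 1 such that the product cocycle Γ̃ generated by γ̃ satisfies ‖Γ̃^m‖ ≤ C̃₀ ξ̃^m for all m ≥ 0. -/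
open Filter Topology

theorem pow_div_le_inv_mul_rpow_inv_pow {q : ℝ} (hq0 : 0 < q) (hq1 : q ≤ 1) {N : ℕ}
    (hN : 0 < N) (m : ℕ) : q ^ (m / N) ≤ q⁻¹ * (q ^ (N : ℝ)⁻¹) ^ m := by
  have hexp : (m : ℝ) * (N : ℝ)⁻¹ ≤ ((m / N + 1 : ℕ) : ℝ) := by
    rw [← div_eq_mul_inv, div_le_iff₀ (by exact_mod_cast hN)]
    have hm : m ≤ (m / N + 1) * N := by
      rw [add_mul, one_mul]; exact (Nat.lt_div_mul_add hN).le
    exact_mod_cast hm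
  calc q ^ (m / N) = q⁻¹ * q ^ (m / N + 1) := by rw [pow_succ]; field_simp
    _ ≤ q⁻¹ * q ^ ((m : ℝ) * (N : ℝ)⁻¹) := by
        gcongr
        rw [← Real.rpow_natCast]
        exact Real.rpow_le_rpow_of_exponent_ge hq0 hq1 hexp
    _ = q⁻¹ * (q ^ (N : ℝ)⁻¹) ^ m := by
        rw [← Real.rpow_natCast _ m, ← Real.rpow_mul hq0.le, mul_comm ((N : ℝ)⁻¹)]

structure IsCocycleProduct {G 𝕜 E : Type*} [AddMonoid G] [NontriviallyNormedField 𝕜]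
    [SeminormedAddCommGroup E] [NormedSpace 𝕜 E]
    (v : G) (γ : G → E →L[𝕜] E) (Γ : ℕ → G → E →L[𝕜] E) : Prop where
  zero : ∀ θ, Γ 0 θ = ContinuousLinearMap.id 𝕜 E
  succ : ∀ j θ, Γ (j + 1) θ = (γ (θ + j • v)).comp (Γ j θ)

namespace IsCocycleProduct

variable {G 𝕜 E : Type*} [AddMonoid G] [NontriviallyNormedField 𝕜]
  [SeminormedAddCommGroup E] [NormedSpace 𝕜 E]
  {v : G} {γ γ' : G → E →L[𝕜] E} {Γ Γ' : ℕ → G → E →L[𝕜] E}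

theorem one (hΓ : IsCocycleProduct v γ Γ) (θ : G) : Γ 1 θ = γ θ := by
  simpa [hΓ.zero] using hΓ.succ 0 θ

theorem add (hΓ : IsCocycleProduct v γ Γ) (m k : ℕ) (θ : G) :
    Γ (m + k) θ = (Γ k (θ + m • v)).comp (Γ m θ) := by
  induction k with
  | zero => simp [hΓ.zero]
  | succ k ih =>
    rw [← add_assoc, hΓ.succ, hΓ.succ, ih, ContinuousLinearMap.comp_assoc, add_nsmul, add_assoc]

theorem norm_le_pow (hΓ : IsCocycleProduct v γ Γ) {B : ℝ} (hγ : ∀ θ, ‖γ θ‖ ≤ B)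
    (m : ℕ) (θ : G) : ‖Γ m θ‖ ≤ B ^ m := by
  have hB : 0 ≤ B := (norm_nonneg _).trans (hγ 0)
  induction m generalizing θ with
  | zero => simpa [hΓ.zero] using ContinuousLinearMap.norm_id_le
  | succ j ih =>
    rw [hΓ.succ, pow_succ']
    exact (ContinuousLinearMap.opNorm_comp_le _ _).trans
      (mul_le_mul (hγ _) (ih θ) (norm_nonneg _) hB)

theorem norm_sub_le (hΓ : IsCocycleProduct v γ Γ) (hΓ' : IsCocycleProduct v γ' Γ')
    {B ε : ℝ} (hγ : ∀ θ, ‖γ θ‖ ≤ B) (hε : ∀ θ, ‖γ θ - γ' θ‖ ≤ ε) (m : ℕ) (θ : G) :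
    ‖Γ m θ - Γ' m θ‖ ≤ (B + ε) ^ m - B ^ m := by
  have hγ' : ∀ θ, ‖γ' θ‖ ≤ B + ε := fun θ =>
    (norm_le_norm_add_norm_sub (γ θ) (γ' θ)).trans (add_le_add (hγ θ) (hε θ))
  have hε0 : 0 ≤ ε := (norm_nonneg _).trans (hε 0)
  induction m generalizing θ with
  | zero => simp [hΓ.zero, hΓ'.zero]
  | succ j ih =>
    set φ := θ + j • v
    have hsplit : (γ φ).comp (Γ j θ) - (γ' φ).comp (Γ' j θ)
        = (γ φ - γ' φ).comp (Γ j θ) + (γ' φ).comp (Γ j θ - Γ' j θ) := by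
      simp only [ContinuousLinearMap.sub_comp, ContinuousLinearMap.comp_sub]
      abel
    rw [hΓ.succ, hΓ'.succ, hsplit]
    calc _ ≤ ‖γ φ - γ' φ‖ * ‖Γ j θ‖ + ‖γ' φ‖ * ‖Γ j θ - Γ' j θ‖ :=
          (norm_add_le _ _).trans (add_le_add (ContinuousLinearMap.opNorm_comp_le _ _)
            (ContinuousLinearMap.opNorm_comp_le _ _))
      _ ≤ ε * B ^ j + (B + ε) * ((B + ε) ^ j - B ^ j) := by
          gcongr
          exacts [hε φ, hΓ.norm_le_pow hγ j θ, (norm_nonneg _).trans (hγ' φ), hγ' φ, ih θ]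
      _ = (B + ε) ^ (j + 1) - B ^ (j + 1) := by ring

theorem norm_mul_add_le (hΓ : IsCocycleProduct v γ Γ) {N ℓ : ℕ} {q K : ℝ}
    (hN : ∀ θ, ‖Γ N θ‖ ≤ q) (hℓ : ∀ θ, ‖Γ ℓ θ‖ ≤ K) (k : ℕ) (θ : G) :
    ‖Γ (N * k + ℓ) θ‖ ≤ q ^ k * K := by
  induction k generalizing θ with
  | zero => simpa using hℓ θ
  | succ k ih =>
    rw [show N * (k + 1) + ℓ = N + (N * k + ℓ) by ring, hΓ.add]
    calc _ ≤ ‖Γ (N * k + ℓ) (θ + N • v)‖ * ‖Γ N θ‖ := ContinuousLinearMap.opNorm_comp_le _ _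
      _ ≤ q ^ k * K * q := mul_le_mul (ih _) (hN θ) (norm_nonneg _)
          ((norm_nonneg _).trans (ih θ))
      _ = q ^ (k + 1) * K := by ring

theorem exists_norm_le_mul_pow (hΓ : IsCocycleProduct v γ Γ) {N : ℕ} (hN : 0 < N) {q K : ℝ}
    (hq0 : 0 < q) (hq1 : q < 1) (hΓN : ∀ θ, ‖Γ N θ‖ ≤ q)
    (hK : ∀ ℓ < N, ∀ θ, ‖Γ ℓ θ‖ ≤ K) :
    ∃ C ξ : ℝ, 0 < ξ ∧ ξ < 1 ∧ ∀ m θ, ‖Γ m θ‖ ≤ C * ξ ^ m := by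
  refine ⟨q⁻¹ * K, q ^ (N : ℝ)⁻¹, Real.rpow_pos_of_pos hq0 _,
    Real.rpow_lt_one hq0.le hq1 (by positivity), fun m θ => ?_⟩
  calc ‖Γ m θ‖ = ‖Γ (N * (m / N) + m % N) θ‖ := by rw [Nat.div_add_mod]
    _ ≤ q ^ (m / N) * K := hΓ.norm_mul_add_le hΓN (hK _ (Nat.mod_lt _ hN)) _ θ
    _ ≤ q⁻¹ * (q ^ (N : ℝ)⁻¹) ^ m * K := mul_le_mul_of_nonneg_right
        (pow_div_le_inv_mul_rpow_inv_pow hq0 hq1.le hN m) ((norm_nonneg _).trans (hK 0 hN θ))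
    _ = q⁻¹ * K * (q ^ (N : ℝ)⁻¹) ^ m := by ring

end IsCocycleProduct

theorem rate_persistence_under_perturbation_general
    {d n : ℕ} (ω : Fin d → ℝ)
    (γ : (Fin d → AddCircle (1 : ℝ)) → ((Fin n → ℝ) →L[ℝ] (Fin n → ℝ)))
    (Γ : ℕ → (Fin d → AddCircle (1 : ℝ)) → ((Fin n → ℝ) →L[ℝ] (Fin n → ℝ)))
    (C₀ ξ : ℝ) (hC₀ : 1 ≤ C₀) (hξ0 : 0 < ξ) (hξ1 : ξ < 1)
    (h0 : ∀ θ, Γ 0 θ = ContinuousLinearMap.id ℝ (Fin n → ℝ))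
    (hS : ∀ j θ, Γ (j + 1) θ = (γ (θ + j • torusRot d ω)).comp (Γ j θ))
    (hΓ : ∀ m θ, ‖Γ m θ‖ ≤ C₀ * ξ ^ m) :
    ∃ εs : ℝ, 0 < εs ∧
      ∀ (γ' : (Fin d → AddCircle (1 : ℝ)) → ((Fin n → ℝ) →L[ℝ] (Fin n → ℝ)))
        (Γ' : ℕ → (Fin d → AddCircle (1 : ℝ)) → ((Fin n → ℝ) →L[ℝ] (Fin n → ℝ))),
        (∀ θ, Γ' 0 θ = ContinuousLinearMap.id ℝ (Fin n → ℝ)) →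
        (∀ j θ, Γ' (j + 1) θ = (γ' (θ + j • torusRot d ω)).comp (Γ' j θ)) →
        (∀ θ, ‖γ θ - γ' θ‖ ≤ εs) →
        ∃ C' ξ' : ℝ, 0 < ξ' ∧ ξ' < 1 ∧ ∀ m θ, ‖Γ' m θ‖ ≤ C' * ξ' ^ m := by
  have hcoc : IsCocycleProduct (torusRot d ω) γ Γ := ⟨h0, hS⟩
  have hγ : ∀ θ, ‖γ θ‖ ≤ C₀ := fun θ => by
    simpa [hcoc.one] using
      (hΓ 1 θ).trans (mul_le_of_le_one_right (by linarith) (by simpa using hξ1.le))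
  obtain ⟨N, hN, hξN⟩ : ∃ N, 0 < N ∧ C₀ * ξ ^ N < 1 / 4 :=
    ((eventually_gt_atTop 0).and <| ((tendsto_pow_atTop_nhds_zero_of_lt_one hξ0.le hξ1).const_mul
      C₀).eventually (gt_mem_nhds (by norm_num))).exists
  obtain ⟨ε, hεN, hε0⟩ : ∃ ε, (C₀ + ε) ^ N < C₀ ^ N + 1 / 4 ∧ 0 < ε := by
    have hcont : Tendsto (fun ε : ℝ => (C₀ + ε) ^ N) (𝓝 0) (𝓝 (C₀ ^ N)) :=
      ((continuous_const_add C₀).pow N).tendsto' 0 _ (by simp)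
    exact ((hcont.mono_left nhdsWithin_le_nhds).eventually (gt_mem_nhds (by linarith))).and
      (self_mem_nhdsWithin : Set.Ioi (0 : ℝ) ∈ 𝓝[>] 0) |>.exists
  refine ⟨ε, hε0, fun γ' Γ' h0' hS' hclose => ?_⟩
  have hcoc' : IsCocycleProduct (torusRot d ω) γ' Γ' := ⟨h0', hS'⟩
  have hγ' : ∀ θ, ‖γ' θ‖ ≤ C₀ + ε := fun θ =>
    (norm_le_norm_add_norm_sub (γ θ) (γ' θ)).trans (add_le_add (hγ θ) (hclose θ))
  refine hcoc'.exists_norm_le_mul_pow hN (q := 1 / 2) (K := (C₀ + ε) ^ N) (by norm_num)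
    (by norm_num) (fun θ => ?_) (fun ℓ hℓ θ => ?_)
  · calc ‖Γ' N θ‖ ≤ ‖Γ N θ‖ + ‖Γ N θ - Γ' N θ‖ := norm_le_norm_add_norm_sub _ _
      _ ≤ C₀ * ξ ^ N + ((C₀ + ε) ^ N - C₀ ^ N) :=
          add_le_add (hΓ N θ) (hcoc.norm_sub_le hcoc' hγ hclose N θ)
      _ ≤ 1 / 2 := by linarith
  · exact (hcoc'.norm_le_pow hγ' ℓ θ).trans (pow_le_pow_right₀ (by linarith) hℓ.le)

/-- Persistence of exponential rates under perturbation of the cocycle: if the products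
of `γ` satisfy `‖Γ^m‖ ≤ C₀ ξ^m` with `ξ < 1`, then there is `ε* > 0` (depending only on
`C₀`, `ξ` and the sup-norm of `γ`) so that any cocycle `γ̃` with `‖γ - γ̃‖ ≤ ε*` has
products satisfying `‖Γ̃^m‖ ≤ C̃₀ ξ̃^m` for some constants `C̃₀` and `ξ̃ < 1`. -/
theorem rate_persistence_under_perturbation
    {d n : ℕ} (ω : Fin d → ℝ)
    (γ : (Fin d → AddCircle (1 : ℝ)) → ((Fin n → ℝ) →L[ℝ] (Fin n → ℝ)))
    (Γ : ℕ → (Fin d → AddCircle (1 : ℝ)) → ((Fin n → ℝ) →L[ℝ] (Fin n → ℝ)))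
    (C₀ ξ Mγ : ℝ) (hC₀ : 1 ≤ C₀) (hξ0 : 0 < ξ) (hξ1 : ξ < 1)
    (h0 : ∀ θ, Γ 0 θ = ContinuousLinearMap.id ℝ (Fin n → ℝ))
    (hS : ∀ j θ, Γ (j + 1) θ = (γ (θ + j • torusRot d ω)).comp (Γ j θ))
    (hΓ : ∀ m θ, ‖Γ m θ‖ ≤ C₀ * ξ ^ m)
    (hγb : ∀ θ, ‖γ θ‖ ≤ Mγ) :
    ∃ εs : ℝ, 0 < εs ∧
      ∀ (γ' : (Fin d → AddCircle (1 : ℝ)) → ((Fin n → ℝ) →L[ℝ] (Fin n → ℝ)))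
        (Γ' : ℕ → (Fin d → AddCircle (1 : ℝ)) → ((Fin n → ℝ) →L[ℝ] (Fin n → ℝ))),
        (∀ θ, Γ' 0 θ = ContinuousLinearMap.id ℝ (Fin n → ℝ)) →
        (∀ j θ, Γ' (j + 1) θ = (γ' (θ + j • torusRot d ω)).comp (Γ' j θ)) →
        (∀ θ, ‖γ θ - γ' θ‖ ≤ εs) →
        ∃ C' ξ' : ℝ, 0 < ξ' ∧ ξ' < 1 ∧ ∀ m θ, ‖Γ' m θ‖ ≤ C' * ξ' ^ m :=
  rate_persistence_under_perturbation_general ω γ Γ C₀ ξ hC₀ hξ0 hξ1 h0 hS hΓ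
end

section
/- Suppose ‖Γ^m_j‖ ≤ C₀ ξ^{m−j} for all m ≥ j ≥ 0 and let a = ‖γ − γ̃‖ (sup norms). Let ξ̃ > 2ξ and C₀ a ξ̃⁻¹ ≤ 1/4. Then the operator L acting on sequences of operators by (L Γ̃)^k = ∑_{j=0}^{k−1} Γ^k_{j+1} [γ̃ − γ]_{θ+jω} Γ̃^j_θ is a contraction with norm ≤ 1/2 in the Banach space of sequences with norm ‖Γ̃‖_{ξ̃} = sup_k ξ̃^{−k} ‖Γ̃^k‖; consequently the perturbed cocycle satisfies ‖Γ̃^m‖ ≤ C̃₀ ξ̃^m with explicit constants. -/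
open Finset

theorem mul_geom_sum₂_le_two_mul_pow {ξ ξt : ℝ} (hξ : 0 ≤ ξ) (hξt : 2 * ξ ≤ ξt) (k : ℕ) :
    ξt * ∑ i ∈ range k, ξt ^ i * ξ ^ (k - 1 - i) ≤ 2 * ξt ^ k := by
  have hξt0 : 0 ≤ ξt := by linarith
  have hT : 0 ≤ ∑ i ∈ range k, ξt ^ i * ξ ^ (k - 1 - i) := sum_nonneg fun i _ => by positivity
  calc ξt * ∑ i ∈ range k, ξt ^ i * ξ ^ (k - 1 - i)
      ≤ 2 * ((∑ i ∈ range k, ξt ^ i * ξ ^ (k - 1 - i)) * (ξt - ξ)) := by nlinarith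
    _ = 2 * (ξt ^ k - ξ ^ k) := by rw [geom_sum₂_mul]
    _ ≤ 2 * ξt ^ k := by have := pow_nonneg hξ k; linarith

section Duhamel

variable {R : Type*}

theorem duhamel_formula [Ring R] {g gt : ℕ → R} {A : ℕ → ℕ → R} {At : ℕ → R}
    (hA0 : ∀ j, A j j = 1) (hAS : ∀ k j, j ≤ k → A (k + 1) j = g k * A k j)
    (hAt0 : At 0 = 1) (hAtS : ∀ j, At (j + 1) = gt j * At j) (m : ℕ) :
    At m = A m 0 + ∑ j ∈ range m, A m (j + 1) * ((gt j - g j) * At j) := by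
  induction m with
  | zero => simp [hAt0, hA0]
  | succ m ih =>
    have hshift : ∀ j ∈ range m, A (m + 1) (j + 1) * ((gt j - g j) * At j)
        = g m * (A m (j + 1) * ((gt j - g j) * At j)) := fun j hj => by
      rw [hAS m (j + 1) (mem_range.mp hj), mul_assoc]
    rw [hAtS, sum_range_succ, sum_congr rfl hshift, ← mul_sum, hA0, hAS m 0 m.zero_le]
    calc gt m * At m = g m * At m + (gt m - g m) * At m := by noncomm_ring
      _ = _ := by rw [one_mul, ih, mul_add, add_assoc]

variable [SeminormedRing R] {A : ℕ → ℕ → R} {C₀ ξ ξt a : ℝ}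

theorem norm_duhamel_sum_le {δ B : ℕ → R} {b : ℝ} (hξ : 0 ≤ ξ) (hξt : 2 * ξ ≤ ξt)
    (hsmall : 4 * (C₀ * a) ≤ ξt) (hb : 0 ≤ b)
    (hA : ∀ m j, j ≤ m → ‖A m j‖ ≤ C₀ * ξ ^ (m - j)) (hδ : ∀ j, ‖δ j‖ ≤ a) {k : ℕ}
    (hB : ∀ j < k, ‖B j‖ ≤ b * ξt ^ j) :
    ‖∑ j ∈ range k, A k (j + 1) * (δ j * B j)‖ ≤ 1 / 2 * (b * ξt ^ k) := by
  have hterm : ∀ j ∈ range k,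
      ‖A k (j + 1) * (δ j * B j)‖ ≤ C₀ * a * b * (ξt ^ j * ξ ^ (k - 1 - j)) := fun j hj => by
    have hjk := mem_range.mp hj
    have hAj := hA k (j + 1) hjk
    have hCξ : 0 ≤ C₀ * ξ ^ (k - (j + 1)) := (norm_nonneg _).trans hAj
    have ha : 0 ≤ a := (norm_nonneg _).trans (hδ j)
    calc ‖A k (j + 1) * (δ j * B j)‖ ≤ ‖A k (j + 1)‖ * (‖δ j‖ * ‖B j‖) :=
          (norm_mul_le _ _).trans (by gcongr; exact norm_mul_le _ _)
      _ ≤ C₀ * ξ ^ (k - (j + 1)) * (a * (b * ξt ^ j)) := by gcongr; exacts [hδ j, hB j hjk]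
      _ = C₀ * a * b * (ξt ^ j * ξ ^ (k - 1 - j)) := by rw [Nat.sub_sub, add_comm 1 j]; ring
  have hT := mul_geom_sum₂_le_two_mul_pow hξ hξt k
  have hξt0 : 0 ≤ ξt := by linarith
  have hTnn : 0 ≤ ∑ i ∈ range k, ξt ^ i * ξ ^ (k - 1 - i) := sum_nonneg fun i _ => by positivity
  calc ‖∑ j ∈ range k, A k (j + 1) * (δ j * B j)‖
      ≤ C₀ * a * b * ∑ j ∈ range k, ξt ^ j * ξ ^ (k - 1 - j) := by
        rw [mul_sum]; exact (norm_sum_le _ _).trans (sum_le_sum hterm)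
    _ ≤ 1 / 2 * (b * ξt ^ k) := by nlinarith [mul_nonneg hb hTnn]

theorem norm_perturbed_cocycle_le {g gt : ℕ → R} {At : ℕ → R} (hξ : 0 ≤ ξ)
    (hξt : 2 * ξ ≤ ξt) (hsmall : 4 * (C₀ * a) ≤ ξt)
    (hA0 : ∀ j, A j j = 1) (hAS : ∀ k j, j ≤ k → A (k + 1) j = g k * A k j)
    (hAt0 : At 0 = 1) (hAtS : ∀ j, At (j + 1) = gt j * At j)
    (hA : ∀ m j, j ≤ m → ‖A m j‖ ≤ C₀ * ξ ^ (m - j)) (hg : ∀ j, ‖g j - gt j‖ ≤ a) (m : ℕ) :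
    ‖At m‖ ≤ 2 * C₀ * ξt ^ m := by
  have hC₀ : 0 ≤ C₀ := by simpa using (norm_nonneg _).trans (hA 0 0 le_rfl)
  induction m using Nat.strong_induction_on with
  | _ m ih =>
    have hL := norm_duhamel_sum_le (B := At) hξ hξt hsmall (by positivity) hA
      (fun j => by rw [norm_sub_rev]; exact hg j) ih
    have hξm : ξ ^ m ≤ ξt ^ m := pow_le_pow_left₀ hξ (by linarith) m
    have hAm : ‖A m 0‖ ≤ C₀ * ξ ^ m := by simpa using hA m 0 m.zero_le
    rw [duhamel_formula hA0 hAS hAt0 hAtS m]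
    calc _ ≤ ‖A m 0‖ + ‖∑ j ∈ range m, A m (j + 1) * ((gt j - g j) * At j)‖ := norm_add_le _ _
      _ ≤ C₀ * ξ ^ m + 1 / 2 * (2 * C₀ * ξt ^ m) := add_le_add hAm hL
      _ ≤ 2 * C₀ * ξt ^ m := by nlinarith

end Duhamel

theorem duhamel_operator_contraction_general
    {d n : ℕ} (ω : Fin d → ℝ)
    (γ γt : (Fin d → AddCircle (1 : ℝ)) → ((Fin n → ℝ) →L[ℝ] (Fin n → ℝ)))
    (Γp : ℕ → ℕ → (Fin d → AddCircle (1 : ℝ)) → ((Fin n → ℝ) →L[ℝ] (Fin n → ℝ)))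
    (Γt : ℕ → (Fin d → AddCircle (1 : ℝ)) → ((Fin n → ℝ) →L[ℝ] (Fin n → ℝ)))
    (C₀ ξ a ξt : ℝ) (hξ : 0 < ξ)
    (hΓp0 : ∀ j θ, Γp j j θ = ContinuousLinearMap.id ℝ (Fin n → ℝ))
    (hΓpS : ∀ k j θ, j ≤ k →
      Γp (k + 1) j θ = (γ (θ + k • torusRot d ω)).comp (Γp k j θ))
    (hΓt0 : ∀ θ, Γt 0 θ = ContinuousLinearMap.id ℝ (Fin n → ℝ))
    (hΓtS : ∀ j θ, Γt (j + 1) θ = (γt (θ + j • torusRot d ω)).comp (Γt j θ))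
    (hΓpb : ∀ m j : ℕ, j ≤ m → ∀ θ, ‖Γp m j θ‖ ≤ C₀ * ξ ^ (m - j))
    (ha : ∀ θ, ‖γ θ - γt θ‖ ≤ a)
    (hξt : 2 * ξ < ξt)
    (hsmall : C₀ * a * ξt⁻¹ ≤ 1 / 4) :
    (∀ (B : ℕ → (Fin d → AddCircle (1 : ℝ)) → ((Fin n → ℝ) →L[ℝ] (Fin n → ℝ))) (b : ℝ),
      (∀ k θ, ‖B k θ‖ ≤ b * ξt ^ k) →
      ∀ k θ,
        ‖∑ j ∈ Finset.range k,
            (Γp k (j + 1) θ).comp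
              ((γt (θ + j • torusRot d ω) - γ (θ + j • torusRot d ω)).comp (B j θ))‖
          ≤ (1 / 2) * (b * ξt ^ k)) ∧
    (∃ C' : ℝ, ∀ m θ, ‖Γt m θ‖ ≤ C' * ξt ^ m) := by
  have hsmall' : 4 * (C₀ * a) ≤ ξt := by
    have := (mul_inv_le_iff₀ (by linarith : (0 : ℝ) < ξt)).mp hsmall
    linarith
  refine ⟨fun B b hB k θ => ?_, 2 * C₀, fun m θ => ?_⟩
  · have hb : 0 ≤ b := by simpa using (norm_nonneg _).trans (hB 0 θ)
    exact norm_duhamel_sum_le (A := fun m j => Γp m j θ) (B := fun j => B j θ)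
      hξ.le hξt.le hsmall' hb (fun m j h => hΓpb m j h θ)
      (fun j => by rw [norm_sub_rev]; exact ha _) (fun j _ => hB j θ)
  · exact norm_perturbed_cocycle_le (A := fun m j => Γp m j θ) (At := fun j => Γt j θ)
      (g := fun k => γ (θ + k • torusRot d ω)) (gt := fun k => γt (θ + k • torusRot d ω))
      hξ.le hξt.le hsmall' (fun j => hΓp0 j θ) (fun k j h => hΓpS k j θ h) (hΓt0 θ)
      (fun j => hΓtS j θ) (fun m j h => hΓpb m j h θ) (fun j => ha _) m

/-- Contraction estimate for the Duhamel operator: if the partial products of `γ` satisfy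
`‖Γ^m_j‖ ≤ C₀ ξ^{m-j}`, `a = ‖γ - γ̃‖`, `ξ̃ > 2ξ` and `C₀ a ξ̃⁻¹ ≤ 1/4`, then the operator
`(L B)^k = ∑_{j<k} Γ^k_{j+1} [γ̃ - γ]_{θ+jω} B^j` contracts with factor `≤ 1/2` in the norm
`‖B‖_{ξ̃} = sup_k ξ̃^{-k} ‖B^k‖`; consequently the perturbed cocycle satisfies
`‖Γ̃^m‖ ≤ C̃₀ ξ̃^m`. -/
theorem duhamel_operator_contraction
    {d n : ℕ} (ω : Fin d → ℝ)
    (γ γt : (Fin d → AddCircle (1 : ℝ)) → ((Fin n → ℝ) →L[ℝ] (Fin n → ℝ)))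
    (Γp : ℕ → ℕ → (Fin d → AddCircle (1 : ℝ)) → ((Fin n → ℝ) →L[ℝ] (Fin n → ℝ)))
    (Γt : ℕ → (Fin d → AddCircle (1 : ℝ)) → ((Fin n → ℝ) →L[ℝ] (Fin n → ℝ)))
    (C₀ ξ a ξt : ℝ) (hC₀ : 0 < C₀) (hξ : 0 < ξ)
    (hΓp0 : ∀ j θ, Γp j j θ = ContinuousLinearMap.id ℝ (Fin n → ℝ))
    (hΓpS : ∀ k j θ, j ≤ k →
      Γp (k + 1) j θ = (γ (θ + k • torusRot d ω)).comp (Γp k j θ))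
    (hΓt0 : ∀ θ, Γt 0 θ = ContinuousLinearMap.id ℝ (Fin n → ℝ))
    (hΓtS : ∀ j θ, Γt (j + 1) θ = (γt (θ + j • torusRot d ω)).comp (Γt j θ))
    (hΓpb : ∀ m j : ℕ, j ≤ m → ∀ θ, ‖Γp m j θ‖ ≤ C₀ * ξ ^ (m - j))
    (ha : ∀ θ, ‖γ θ - γt θ‖ ≤ a)
    (hξt : 2 * ξ < ξt)
    (hsmall : C₀ * a * ξt⁻¹ ≤ 1 / 4) :
    (∀ (B : ℕ → (Fin d → AddCircle (1 : ℝ)) → ((Fin n → ℝ) →L[ℝ] (Fin n → ℝ))) (b : ℝ),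
      (∀ k θ, ‖B k θ‖ ≤ b * ξt ^ k) →
      ∀ k θ,
        ‖∑ j ∈ Finset.range k,
            (Γp k (j + 1) θ).comp
              ((γt (θ + j • torusRot d ω) - γ (θ + j • torusRot d ω)).comp (B j θ))‖
          ≤ (1 / 2) * (b * ξt ^ k)) ∧
    (∃ C' : ℝ, ∀ m θ, ‖Γt m θ‖ ≤ C' * ξt ^ m) :=
  duhamel_operator_contraction_general ω γ γt Γp Γt C₀ ξ a ξt hξ hΓp0 hΓpS hΓt0 hΓtS hΓpb ha hξt
    hsmall
end

section
/- Let K: T^d → ℝ^{2n} be smooth with DK(θ) of full rank d, let J(θ) be invertible antisymmetric 2n×2n matrices depending on θ, and assume the isotropy condition DK(θ)^T J(θ) DK(θ) = 0. Set N(θ) = (DK(θ)^T DK(θ))⁻¹ and M(θ) = [DK(θ) | J(θ)⁻¹ DK(θ) N(θ)] (a 2n×2d matrix). Then M(θ) has rank 2d, i.e., the columns of DK(θ) and of J(θ)⁻¹DK(θ)N(θ) together span a 2d-dimensional space. -/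
open Matrix

lemma isUnit_of_rank_eq_card {d : ℕ} (A : Matrix (Fin d) (Fin d) ℝ) (h : A.rank = d) :
    IsUnit A := by
  rw [← Matrix.mulVec_surjective_iff_isUnit]
  have htop : LinearMap.range A.mulVecLin = ⊤ := by
    apply Submodule.eq_top_of_finrank_eq
    rw [show Module.finrank ℝ (LinearMap.range A.mulVecLin) = A.rank from rfl, h]
    simp [Module.finrank_pi]
  exact fun v => LinearMap.range_eq_top.mp htop v

/-- Rank statement of automatic reducibility: if `K : T^d → ℝ^{2n}` is smooth with
Jacobian `DK(θ)` of full rank `d`, `J(θ)` are invertible antisymmetric matrices and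
`DK(θ)ᵀ J(θ) DK(θ) = 0` (isotropy), then with `N(θ) = (DK(θ)ᵀ DK(θ))⁻¹` the `2n × 2d`
matrix `M(θ) = [DK(θ) | J(θ)⁻¹ DK(θ) N(θ)]` has rank `2d`. -/
theorem automatic_reducibility_frame_rank
    {d n : ℕ}
    (K : (Fin d → ℝ) → (Fin (2 * n) → ℝ)) (hK : ContDiff ℝ (⊤ : ℕ∞) K)
    (J : (Fin d → ℝ) → Matrix (Fin (2 * n)) (Fin (2 * n)) ℝ)
    (hJinv : ∀ θ, IsUnit (J θ)) (hJanti : ∀ θ, (J θ)ᵀ = -(J θ))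
    (DK : (Fin d → ℝ) → Matrix (Fin (2 * n)) (Fin d) ℝ)
    (hDK : ∀ θ, DK θ = LinearMap.toMatrix' (fderiv ℝ K θ).toLinearMap)
    (hrank : ∀ θ, (DK θ).rank = d)
    (hiso : ∀ θ, (DK θ)ᵀ * J θ * DK θ = 0) :
    ∀ θ, (Matrix.fromCols (DK θ)
        ((J θ)⁻¹ * DK θ * ((DK θ)ᵀ * DK θ)⁻¹)).rank = 2 * d := by
  intro θ
  set A := DK θ with hA
  set Jm := J θ with hJm
  have hJ : IsUnit Jm := hJinv θ
  have hJdet : IsUnit Jm.det := (isUnit_iff_isUnit_det _).mp hJ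
  set G := Aᵀ * A with hGdef
  have hGrank : G.rank = d := by rw [hGdef, rank_transpose_mul_self, hrank]
  have hG : IsUnit G := isUnit_of_rank_eq_card G hGrank
  have hGdet : IsUnit G.det := (isUnit_iff_isUnit_det _).mp hG
  set N := G⁻¹ with hNdef
  have hNsymm : Nᵀ = N := by
    rw [hNdef, transpose_nonsing_inv, hGdef, transpose_mul, transpose_transpose]
  set B := Jm⁻¹ * A * N with hBdef
  set P := fromCols A B with hPdef
  -- transpose of B
  have hJinvT : (Jm⁻¹)ᵀ = -Jm⁻¹ := by
    rw [transpose_nonsing_inv, hJanti θ]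
    refine inv_eq_right_inv ?_
    rw [Matrix.neg_mul, Matrix.mul_neg, neg_neg, mul_nonsing_inv _ hJdet]
  -- block computations
  have hTL : Aᵀ * (Jm * A) = 0 := by rw [← Matrix.mul_assoc, hiso θ]
  have hTR : Aᵀ * (Jm * B) = 1 := by
    rw [hBdef, Matrix.mul_assoc Jm⁻¹ A N, mul_nonsing_inv_cancel_left _ _ hJdet,
      ← Matrix.mul_assoc, ← hGdef, hNdef, mul_nonsing_inv _ hGdet]
  have hBL : Bᵀ * (Jm * A) = -1 := by
    rw [hBdef, transpose_mul, transpose_mul, hJinvT, hNsymm,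
      Matrix.mul_neg, Matrix.mul_neg, Matrix.neg_mul, Matrix.mul_assoc N,
      Matrix.mul_assoc Aᵀ, nonsing_inv_mul_cancel_left _ _ hJdet,
      ← hGdef, hNdef, nonsing_inv_mul _ hGdet]
  -- key product
  have hkey : Pᵀ * (Jm * P) = fromBlocks 0 1 (-1) (Bᵀ * (Jm * B)) := by
    rw [hPdef, transpose_fromCols, mul_fromCols, fromRows_mul_fromCols,
      hTL, hTR, hBL]
  -- invertibility of the block matrix
  set X := Bᵀ * (Jm * B) with hXdef
  have hQunit : IsUnit (fromBlocks (0 : Matrix (Fin d) (Fin d) ℝ) 1 (-1) X) := by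
    have hmul : fromBlocks (0 : Matrix (Fin d) (Fin d) ℝ) 1 (-1) X *
        fromBlocks X (-1) 1 0 = 1 := by
      rw [fromBlocks_multiply, ← fromBlocks_one]
      congr 1 <;> simp
    exact @isUnit_of_invertible _ _ _ (invertibleOfRightInverse _ _ hmul)
  have hQrank : (Pᵀ * (Jm * P)).rank = d + d := by
    rw [hkey, rank_of_isUnit _ hQunit]
    simp
  have h1 : d + d ≤ P.rank := by
    calc d + d = (Pᵀ * (Jm * P)).rank := hQrank.symm
    _ = ((Pᵀ * Jm) * P).rank := by rw [Matrix.mul_assoc]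
    _ ≤ P.rank := rank_mul_le_right _ _
  have h2 : P.rank ≤ d + d := by
    have := P.rank_le_card_width
    simpa using this
  omega
end

section
/- In the setting of automatic reducibility for a conformally symplectic map with factor λ: if f ∘ K = K ∘ T_ω exactly, DK has full rank, DK^T (J^c ∘ K) DK = 0, and Df ∘ K satisfies the conformal identity Df^T (J^c∘f) Df = λ (J^c), then the second diagonal block in the reduced cocycle equals λ Id_d; that is, writing Df∘K(θ) M(θ) = M(θ+ω) B(θ) with M(θ) = [DK(θ) | (J^c)⁻¹∘K(θ) DK(θ)N(θ)], the matrix B(θ) is upper triangular of the form [[Id_d, S(θ)], [0, λ Id_d]]. -/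
/-!
Differentiating the invariance equation `f ∘ K = K ∘ T_ω` gives `Df DK = DK'`, primes denoting
evaluation at `θ + ω`. Pair both sides of `Df M = M' B` with `M'ᵀ J'`: by isotropy and
antisymmetry, `M'ᵀ J' M'` is the invertible block matrix `[[0, Id], [-Id, -P'ᵀ J'⁻¹ P']]`, while the
conformal identity `DKᵀ Dfᵀ J' Df = λ DKᵀ J` gives
`M'ᵀ J' Df M = [[0, λ Id], [-Id, -P'ᵀ Df J⁻¹ P]]`. Cancelling the first matrix yields `B`.
-/

open Matrix

section Derivative

variable {𝕜 E F : Type*} [NontriviallyNormedField 𝕜] [NormedAddCommGroup E] [NormedSpace 𝕜 E]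
  [NormedAddCommGroup F] [NormedSpace 𝕜 F]

theorem fderiv_comp_fderiv_of_comp_eq_comp_add {f : F → F} {K : E → F} {ω θ : E}
    (hf : DifferentiableAt 𝕜 f (K θ)) (hK : DifferentiableAt 𝕜 K θ)
    (hinv : ∀ x, f (K x) = K (x + ω)) :
    (fderiv 𝕜 f (K θ)).comp (fderiv 𝕜 K θ) = fderiv 𝕜 K (θ + ω) := by
  rw [← fderiv_comp θ hf hK, ← fderiv_comp_add_right ω]
  exact congrArg (fderiv 𝕜 · θ) (funext hinv)

end Derivative

namespace Matrix

variable {R m k : Type*}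

theorem isUnit_of_rank_eq_card [Fintype k] [DecidableEq k] [Field R] {A : Matrix k k R}
    (h : A.rank = Fintype.card k) : IsUnit A := by
  rw [← mulVec_surjective_iff_isUnit]
  have hrange : LinearMap.range A.mulVecLin = ⊤ :=
    Submodule.eq_top_of_finrank_eq (by simpa [rank] using h)
  exact LinearMap.range_eq_top.mp hrange

theorem isUnit_transpose_mul_self_of_rank_eq [Fintype m] [Fintype k] [DecidableEq k] [Field R]
    [LinearOrder R] [IsStrictOrderedRing R] {A : Matrix m k R} (h : A.rank = Fintype.card k) :
    IsUnit (Aᵀ * A) :=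
  isUnit_of_rank_eq_card (by rw [rank_transpose_mul_self, h])

theorem transpose_nonsing_inv_mul_mul_of_transpose_eq_neg [Fintype m] [DecidableEq m] [CommRing R]
    {J : Matrix m m R} (hJ : IsUnit J.det) (hJa : Jᵀ = -J) (X : Matrix m k R) :
    (J⁻¹ * X)ᵀ * J = -Xᵀ := by
  have hinvJ : J⁻¹ᵀ * J = -1 := by
    rw [← transpose_transpose J, ← transpose_mul, transpose_transpose, hJa, neg_mul,
      mul_nonsing_inv _ hJ, transpose_neg, transpose_one]
  rw [transpose_mul, Matrix.mul_assoc, hinvJ, Matrix.mul_neg, Matrix.mul_one]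

variable [Fintype m] [Fintype k] [DecidableEq m] [DecidableEq k] [CommRing R]

theorem isUnit_fromBlocks_zero_one_neg_one (X : Matrix k k R) :
    IsUnit (fromBlocks 0 1 (-1) X : Matrix (k ⊕ k) (k ⊕ k) R) := by
  refine (isUnit_iff_isUnit_det _).mpr
    (isUnit_det_of_left_inverse (B := fromBlocks X (-1) 1 0) ?_)
  rw [fromBlocks_multiply, ← fromBlocks_one]
  simp

/-- The paper's frame `M = [DK | J⁻¹ DK N]`, with `N` any right inverse of the Gram matrix
`DKᵀ DK`. -/
noncomputable def reducingFrame (J : Matrix m m R) (A : Matrix m k R) (N : Matrix k k R) :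
    Matrix m (k ⊕ k) R :=
  fromCols A (J⁻¹ * A * N)

variable {J J' D : Matrix m m R} {A A' : Matrix m k R} {N N' : Matrix k k R} {c : R}

theorem transpose_reducingFrame_mul_mul_mul_reducingFrame (hJ : IsUnit J.det)
    (hJ' : IsUnit J'.det) (hJ'a : J'ᵀ = -J') (hiso : A'ᵀ * J' * A' = 0)
    (hN : Aᵀ * A * N = 1) (hN' : A'ᵀ * A' * N' = 1) (hDA : D * A = A')
    (hconf : Dᵀ * J' * D = c • J) :
    (reducingFrame J' A' N')ᵀ * J' * (D * reducingFrame J A N) =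
      fromBlocks 0 (c • 1) (-1) (-((A' * N')ᵀ * D * J⁻¹ * (A * N))) := by
  have hP' : (A' * N')ᵀ * A' = 1 := by
    simpa only [transpose_mul, transpose_transpose, transpose_one, Matrix.mul_assoc]
      using congrArg transpose hN'
  have hskew : (J'⁻¹ * A' * N')ᵀ * J' = -(A' * N')ᵀ := by
    rw [Matrix.mul_assoc, transpose_nonsing_inv_mul_mul_of_transpose_eq_neg hJ' hJ'a]
  have hpair : A'ᵀ * J' * (D * (J⁻¹ * A * N)) = c • 1 := calc
    A'ᵀ * J' * (D * (J⁻¹ * A * N)) = Aᵀ * (Dᵀ * J' * D) * J⁻¹ * A * N := by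
      simp only [← hDA, transpose_mul, Matrix.mul_assoc]
    _ = c • 1 := by
      rw [hconf, Matrix.mul_smul, Matrix.smul_mul, Matrix.smul_mul, Matrix.smul_mul,
        Matrix.mul_assoc Aᵀ J, mul_nonsing_inv _ hJ, Matrix.mul_one, hN]
  rw [reducingFrame, reducingFrame, mul_fromCols, hDA, transpose_fromCols, fromRows_mul,
    fromRows_mul_fromCols, hiso, hpair, hskew, Matrix.neg_mul, Matrix.neg_mul, hP']
  simp only [Matrix.mul_assoc]

theorem eq_fromBlocks_of_mul_reducingFrame {B : Matrix (k ⊕ k) (k ⊕ k) R}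
    (hJ : IsUnit J.det) (hJ' : IsUnit J'.det) (hJ'a : J'ᵀ = -J') (hiso : A'ᵀ * J' * A' = 0)
    (hN : Aᵀ * A * N = 1) (hN' : A'ᵀ * A' * N' = 1) (hDA : D * A = A')
    (hconf : Dᵀ * J' * D = c • J)
    (hB : D * reducingFrame J A N = reducingFrame J' A' N' * B) :
    B = fromBlocks 1 ((A' * N')ᵀ * D * J⁻¹ * (A * N) - c • ((A' * N')ᵀ * J'⁻¹ * (A' * N')))
      0 (c • 1) := by
  set X := (A' * N')ᵀ * J'⁻¹ * (A' * N')
  have hframe : (reducingFrame J' A' N')ᵀ * J' * reducingFrame J' A' N' =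
      fromBlocks 0 1 (-1) (-X) := by
    simpa [X] using transpose_reducingFrame_mul_mul_mul_reducingFrame (D := 1) (c := 1) hJ' hJ'
      hJ'a hiso hN' hN' (Matrix.one_mul A') (by simp)
  refine ((isUnit_fromBlocks_zero_one_neg_one (-X)).mul_left_cancel ?_).symm
  calc fromBlocks 0 1 (-1) (-X) *
        fromBlocks 1 ((A' * N')ᵀ * D * J⁻¹ * (A * N) - c • X) 0 (c • 1)
      = fromBlocks 0 (c • 1) (-1) (-((A' * N')ᵀ * D * J⁻¹ * (A * N))) := by
        rw [fromBlocks_multiply]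
        simp only [Matrix.mul_one, Matrix.mul_zero, Matrix.zero_mul, Matrix.one_mul, add_zero,
          zero_add, Matrix.neg_mul, Matrix.mul_smul, smul_neg, neg_sub, fromBlocks_inj, true_and]
        abel
    _ = (reducingFrame J' A' N')ᵀ * J' * (D * reducingFrame J A N) :=
        (transpose_reducingFrame_mul_mul_mul_reducingFrame hJ hJ' hJ'a hiso hN hN' hDA hconf).symm
    _ = fromBlocks 0 1 (-1) (-X) * B := by simp only [hB, ← hframe, Matrix.mul_assoc]

end Matrix

theorem automatic_reducibility_general
    {d n : ℕ} (ω : Fin d → ℝ) (lam : ℝ)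
    (f : (Fin (2 * n) → ℝ) → (Fin (2 * n) → ℝ)) (hf : Differentiable ℝ f)
    (K : (Fin d → ℝ) → (Fin (2 * n) → ℝ)) (hK : Differentiable ℝ K)
    (hinv : ∀ θ, f (K θ) = K (θ + ω))
    (DK : (Fin d → ℝ) → Matrix (Fin (2 * n)) (Fin d) ℝ)
    (hDK : ∀ θ, DK θ = LinearMap.toMatrix' (fderiv ℝ K θ).toLinearMap)
    (Df : (Fin d → ℝ) → Matrix (Fin (2 * n)) (Fin (2 * n)) ℝ)
    (hDf : ∀ θ, Df θ = LinearMap.toMatrix' (fderiv ℝ f (K θ)).toLinearMap)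
    (Jc : (Fin d → ℝ) → Matrix (Fin (2 * n)) (Fin (2 * n)) ℝ)
    (hJcU : ∀ θ, IsUnit (Jc θ)) (hJca : ∀ θ, (Jc θ)ᵀ = -(Jc θ))
    (hrank : ∀ θ, (DK θ).rank = d)
    (hiso : ∀ θ, (DK θ)ᵀ * Jc θ * DK θ = 0)
    (hconf : ∀ θ, (Df θ)ᵀ * Jc (θ + ω) * Df θ = lam • Jc θ)
    (N : (Fin d → ℝ) → Matrix (Fin d) (Fin d) ℝ)
    (hN : ∀ θ, N θ = ((DK θ)ᵀ * DK θ)⁻¹)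
    (P : (Fin d → ℝ) → Matrix (Fin (2 * n)) (Fin d) ℝ)
    (hP : ∀ θ, P θ = DK θ * N θ)
    (χ : (Fin d → ℝ) → Matrix (Fin d) (Fin d) ℝ)
    (hχ : ∀ θ, χ θ = (DK θ)ᵀ * (Jc θ)⁻¹ * DK θ)
    (S : (Fin d → ℝ) → Matrix (Fin d) (Fin d) ℝ)
    (hS : ∀ θ, S θ = (P (θ + ω))ᵀ * Df θ * (Jc θ)⁻¹ * P θ -
      lam • ((N (θ + ω))ᵀ * χ (θ + ω) * N (θ + ω)))
    (M : (Fin d → ℝ) → Matrix (Fin (2 * n)) (Fin d ⊕ Fin d) ℝ)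
    (hM : ∀ θ, M θ = Matrix.fromCols (DK θ) ((Jc θ)⁻¹ * DK θ * N θ))
    (B : (Fin d → ℝ) → Matrix (Fin d ⊕ Fin d) (Fin d ⊕ Fin d) ℝ)
    (hB : ∀ θ, Df θ * M θ = M (θ + ω) * B θ) :
    ∀ θ, B θ = Matrix.fromBlocks (1 : Matrix (Fin d) (Fin d) ℝ) (S θ)
      (0 : Matrix (Fin d) (Fin d) ℝ) (lam • (1 : Matrix (Fin d) (Fin d) ℝ)) := by
  intro θ
  have hDf_DK : Df θ * DK θ = DK (θ + ω) := by
    rw [hDf, hDK, hDK, ← LinearMap.toMatrix'_comp, ← ContinuousLinearMap.toLinearMap_comp,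
      fderiv_comp_fderiv_of_comp_eq_comp_add (hf _) (hK _) hinv]
  have hgram : ∀ θ, (DK θ)ᵀ * DK θ * N θ = 1 := fun θ => by
    rw [hN, mul_nonsing_inv _ ((isUnit_iff_isUnit_det _).mp
      (isUnit_transpose_mul_self_of_rank_eq (by rw [hrank, Fintype.card_fin])))]
  have hunit : ∀ θ, IsUnit (Jc θ).det := fun θ => (isUnit_iff_isUnit_det _).mp (hJcU θ)
  have hframe : Df θ * reducingFrame (Jc θ) (DK θ) (N θ) =
      reducingFrame (Jc (θ + ω)) (DK (θ + ω)) (N (θ + ω)) * B θ := by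
    simpa only [reducingFrame, hM] using hB θ
  rw [eq_fromBlocks_of_mul_reducingFrame (hunit θ) (hunit (θ + ω)) (hJca _) (hiso _) (hgram θ)
    (hgram _) hDf_DK (hconf θ) hframe, hS, hP, hP, hχ]
  simp only [transpose_mul, Matrix.mul_assoc]

/-- Automatic reducibility for a conformally symplectic map with factor `λ`: if
`f ∘ K = K ∘ T_ω` exactly, `DK` has full rank, `DKᵀ (J^c ∘ K) DK = 0` (isotropy), and
`Df ∘ K` satisfies the conformal identity `Dfᵀ (J^c ∘ f) Df = λ J^c`, then, writing
`Df∘K(θ) M(θ) = M(θ+ω) B(θ)` with `M(θ) = [DK(θ) | (J^c)⁻¹∘K(θ) DK(θ) N(θ)]`, the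
matrix `B(θ)` is upper triangular of the form `[[Id_d, S(θ)], [0, λ Id_d]]`. -/
theorem automatic_reducibility
    {d n : ℕ} (ω : Fin d → ℝ) (lam : ℝ) (hlam : lam ≠ 0)
    (f : (Fin (2 * n) → ℝ) → (Fin (2 * n) → ℝ)) (hf : Differentiable ℝ f)
    (K : (Fin d → ℝ) → (Fin (2 * n) → ℝ)) (hK : Differentiable ℝ K)
    (hinv : ∀ θ, f (K θ) = K (θ + ω))
    (DK : (Fin d → ℝ) → Matrix (Fin (2 * n)) (Fin d) ℝ)
    (hDK : ∀ θ, DK θ = LinearMap.toMatrix' (fderiv ℝ K θ).toLinearMap)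
    (Df : (Fin d → ℝ) → Matrix (Fin (2 * n)) (Fin (2 * n)) ℝ)
    (hDf : ∀ θ, Df θ = LinearMap.toMatrix' (fderiv ℝ f (K θ)).toLinearMap)
    (hDfU : ∀ θ, IsUnit (Df θ))
    (Jc : (Fin d → ℝ) → Matrix (Fin (2 * n)) (Fin (2 * n)) ℝ)
    (hJcU : ∀ θ, IsUnit (Jc θ)) (hJca : ∀ θ, (Jc θ)ᵀ = -(Jc θ))
    (hrank : ∀ θ, (DK θ).rank = d)
    (hiso : ∀ θ, (DK θ)ᵀ * Jc θ * DK θ = 0)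
    (hconf : ∀ θ, (Df θ)ᵀ * Jc (θ + ω) * Df θ = lam • Jc θ)
    (N : (Fin d → ℝ) → Matrix (Fin d) (Fin d) ℝ)
    (hN : ∀ θ, N θ = ((DK θ)ᵀ * DK θ)⁻¹)
    (P : (Fin d → ℝ) → Matrix (Fin (2 * n)) (Fin d) ℝ)
    (hP : ∀ θ, P θ = DK θ * N θ)
    (χ : (Fin d → ℝ) → Matrix (Fin d) (Fin d) ℝ)
    (hχ : ∀ θ, χ θ = (DK θ)ᵀ * (Jc θ)⁻¹ * DK θ)
    (S : (Fin d → ℝ) → Matrix (Fin d) (Fin d) ℝ)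
    (hS : ∀ θ, S θ = (P (θ + ω))ᵀ * Df θ * (Jc θ)⁻¹ * P θ -
      lam • ((N (θ + ω))ᵀ * χ (θ + ω) * N (θ + ω)))
    (M : (Fin d → ℝ) → Matrix (Fin (2 * n)) (Fin d ⊕ Fin d) ℝ)
    (hM : ∀ θ, M θ = Matrix.fromCols (DK θ) ((Jc θ)⁻¹ * DK θ * N θ))
    (B : (Fin d → ℝ) → Matrix (Fin d ⊕ Fin d) (Fin d ⊕ Fin d) ℝ)
    (hB : ∀ θ, Df θ * M θ = M (θ + ω) * B θ) :
    ∀ θ, B θ = Matrix.fromBlocks (1 : Matrix (Fin d) (Fin d) ℝ) (S θ)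
      (0 : Matrix (Fin d) (Fin d) ℝ) (lam • (1 : Matrix (Fin d) (Fin d) ℝ)) :=
  automatic_reducibility_general ω lam f hf K hK hinv DK hDK Df hDf Jc hJcU hJca hrank hiso hconf N
    hN P hP χ hχ S hS M hM B hB
end
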